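/- arXiv:hep-th/9712182 — 4 statements merged into one kernel-verified Lean document; each statement's English description precedes it below -/
import Mathlib

section
/- Assume p·q = 0 and q ≠ 0. Then the relative BRST cohomology at ghost number one, H^1(R(p,q)), is one-dimensional, spanned by the class of the state q·A_0 = q₀A_0^0 + q₁A_0^1. -/
/-!
Massless relative BRST complex of the N=2 string in the (−1,0) picture.

Basis: for each N ≥ 0, `A N 0`, `A N 1` in degree 2N+1 and `B N`, `C N` in
degree 2N+2.  Momenta `p q : Fin 2 → ℂ` correspond to (p⁰,p¹) and (q₀,q₁).
The BRST differential acts by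
  Q A_N^0 = 2p⁰ B_N − q₁ C_N,
  Q A_N^1 = 2p¹ B_N + q₀ C_N,
  Q B_N   = q₀ A_{N+1}^0 + q₁ A_{N+1}^1,
  Q C_N   = 2p⁰ A_{N+1}^1 − 2p¹ A_{N+1}^0.
-/

/-- Basis of the relative complex `R(p,q)`. -/
inductive RB where
  | A : ℕ → Fin 2 → RB
  | B : ℕ → RB
  | C : ℕ → RB

/-- The underlying vector space of the complex `R(p,q)`: formal ℂ-linear
combinations of basis vectors. -/
abbrev RSpace : Type := RB →₀ ℂ

/-- The ghost-number degree of a basis vector. -/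
def RB.deg : RB → ℤ
  | .A N _ => 2 * (N : ℤ) + 1
  | .B N => 2 * (N : ℤ) + 2
  | .C N => 2 * (N : ℤ) + 2

/-- The degree-`g` graded piece `R^g` (the span of the basis vectors of
degree `g`); it is `0` for `g ≤ 0`. -/
noncomputable def Rdeg (g : ℤ) : Submodule ℂ RSpace :=
  Finsupp.supported ℂ ℂ {b : RB | RB.deg b = g}

open Finsupp in
/-- The BRST differential `Q` of `R(p,q)`. -/
noncomputable def Qmap (p q : Fin 2 → ℂ) : RSpace →ₗ[ℂ] RSpace :=
  Finsupp.lift RSpace ℂ RB fun b => match b with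
    | .A N μ =>
        (2 * p μ) • single (RB.B N) (1 : ℂ)
          + (if μ = 0 then -(q 1) else q 0) • single (RB.C N) (1 : ℂ)
    | .B N =>
        q 0 • single (RB.A (N + 1) 0) (1 : ℂ)
          + q 1 • single (RB.A (N + 1) 1) (1 : ℂ)
    | .C N =>
        (2 * p 0) • single (RB.A (N + 1) 1) (1 : ℂ)
          - (2 * p 1) • single (RB.A (N + 1) 0) (1 : ℂ)

/-- The state `q·A_N = q₀ A_N^0 + q₁ A_N^1`. -/
noncomputable def qA (q : Fin 2 → ℂ) (N : ℕ) : RSpace :=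
  q 0 • Finsupp.single (RB.A N 0) (1 : ℂ) + q 1 • Finsupp.single (RB.A N 1) (1 : ℂ)

/-- Degree-`g` cocycles: `ker Q ∩ R^g`. -/
noncomputable def Zg (p q : Fin 2 → ℂ) (g : ℤ) : Submodule ℂ RSpace :=
  Rdeg g ⊓ LinearMap.ker (Qmap p q)

/-- Degree-`g` coboundaries: `Q(R^{g-1})`. -/
noncomputable def Bg (p q : Fin 2 → ℂ) (g : ℤ) : Submodule ℂ RSpace :=
  (Rdeg (g - 1)).map (Qmap p q)

/-- The relative BRST cohomology `H^g(R(p,q)) = (ker Q ∩ R^g)/Q(R^{g-1})`,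
realised as the image of the cocycles `Z^g` in the quotient of the whole space
by the coboundaries `B^g = Q(R^{g-1})`. -/
noncomputable def Hco (p q : Fin 2 → ℂ) (g : ℤ) :
    Submodule ℂ (RSpace ⧸ Bg p q g) :=
  (Zg p q g).map (Bg p q g).mkQ

open Finsupp

lemma Rdeg_zero : Rdeg 0 = ⊥ := by
  have hset : {b : RB | RB.deg b = 0} = (∅ : Set RB) := by
    ext b
    simp only [Set.mem_setOf_eq, Set.mem_empty_iff_false, iff_false]
    cases b <;> simp [RB.deg] <;> omega
  rw [Rdeg, hset, Finsupp.supported_empty]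

lemma Bg_one (p q : Fin 2 → ℂ) : Bg p q 1 = ⊥ := by
  have : (1 : ℤ) - 1 = 0 := by norm_num
  rw [Bg, this, Rdeg_zero, Submodule.map_bot]

lemma Q_single_A0 (p q : Fin 2 → ℂ) (N : ℕ) :
    Qmap p q (single (RB.A N 0) 1) =
      (2 * p 0) • single (RB.B N) (1 : ℂ) + (-(q 1)) • single (RB.C N) (1 : ℂ) := by
  simp [Qmap, Finsupp.lift_apply, Finsupp.sum_single_index]

lemma Q_single_A1 (p q : Fin 2 → ℂ) (N : ℕ) :
    Qmap p q (single (RB.A N 1) 1) =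
      (2 * p 1) • single (RB.B N) (1 : ℂ) + (q 0) • single (RB.C N) (1 : ℂ) := by
  simp [Qmap, Finsupp.lift_apply, Finsupp.sum_single_index]

lemma decompose (x : RSpace) (hx : x ∈ Rdeg 1) :
    x = x (RB.A 0 0) • single (RB.A 0 0) (1:ℂ) + x (RB.A 0 1) • single (RB.A 0 1) (1:ℂ) := by
  have h' := (Finsupp.mem_supported' ℂ x).mp hx
  ext b
  match b with
  | RB.A 0 0 => simp [Finsupp.single_apply]
  | RB.A 0 1 => simp [Finsupp.single_apply]
  | RB.A (N+1) μ =>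
      rw [h' _ (by simp [RB.deg]; omega)]
      simp [Finsupp.single_apply]
  | RB.B N =>
      rw [h' _ (by simp [RB.deg]; omega)]
      simp [Finsupp.single_apply]
  | RB.C N =>
      rw [h' _ (by simp [RB.deg]; omega)]
      simp [Finsupp.single_apply]

lemma zg_structure (p q : Fin 2 → ℂ) (hq : q ≠ 0) (x : RSpace) (hx : x ∈ Zg p q 1) :
    ∃ c : ℂ, x = c • qA q 0 := by
  obtain ⟨hx1, hx2⟩ := hx
  set a := x (RB.A 0 0) with ha
  set b := x (RB.A 0 1) with hb
  have hdec : x = a • single (RB.A 0 0) (1:ℂ) + b • single (RB.A 0 1) (1:ℂ) := decompose x hx1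
  have hker : Qmap p q x = 0 := LinearMap.mem_ker.mp hx2
  have h0 : Qmap p q x (RB.C 0) = 0 := by rw [hker]; rfl
  rw [hdec, map_add, map_smul, map_smul, Q_single_A0, Q_single_A1] at h0
  simp only [Finsupp.smul_apply, Finsupp.add_apply, Finsupp.single_apply] at h0
  simp [Finsupp.single_apply] at h0
  have hq01 : q 0 ≠ 0 ∨ q 1 ≠ 0 := by
    by_contra hc
    push_neg at hc
    exact hq (funext fun i => by fin_cases i <;> simp [hc.1, hc.2])
  rcases hq01 with h' | h'
  · refine ⟨a / q 0, ?_⟩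
    rw [hdec, qA, smul_add, smul_smul, smul_smul]
    congr 2
    · field_simp
    · field_simp
      linear_combination h0
  · refine ⟨b / q 1, ?_⟩
    rw [hdec, qA, smul_add, smul_smul, smul_smul]
    congr 2
    · field_simp
      linear_combination -h0
    · field_simp

/-- Assume `p·q = 0` and `q ≠ 0`.  Then the relative BRST
cohomology at ghost number one, `H^1(R(p,q))`, is one-dimensional, spanned by
the class of the state `q·A_0 = q₀ A_0^0 + q₁ A_0^1`. -/
theorem relative_cohomology_ghost_one (p q : Fin 2 → ℂ)
    (h : p 0 * q 0 + p 1 * q 1 = 0) (hq : q ≠ 0)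
    (hmem : (Bg p q 1).mkQ (qA q 0) ∈ Hco p q 1) :
    Submodule.span ℂ {(⟨(Bg p q 1).mkQ (qA q 0), hmem⟩ : ↥(Hco p q 1))} = ⊤ ∧
      (⟨(Bg p q 1).mkQ (qA q 0), hmem⟩ : ↥(Hco p q 1)) ≠ 0 := by
  constructor
  · rw [Submodule.eq_top_iff']
    rintro ⟨y, hy⟩
    obtain ⟨x, hxZ, hxy⟩ := Submodule.mem_map.mp hy
    obtain ⟨c, rfl⟩ := zg_structure p q hq x hxZ
    rw [Submodule.mem_span_singleton]
    refine ⟨c, Subtype.ext ?_⟩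
    simp only [SetLike.val_smul]
    rw [← hxy, map_smul]
  · intro hzero
    have h0 : (Bg p q 1).mkQ (qA q 0) = 0 := congrArg Subtype.val hzero
    rw [Submodule.mkQ_apply, Submodule.Quotient.mk_eq_zero, Bg_one, Submodule.mem_bot] at h0
    apply hq
    have h00 := DFunLike.congr_fun h0 (RB.A 0 0)
    have h01 := DFunLike.congr_fun h0 (RB.A 0 1)
    simp [qA, Finsupp.single_apply] at h00 h01
    funext i
    fin_cases i
    · simpa using h00
    · simpa using h01
end

section
/- Assume p·q = 0 and q ≠ 0. Then the relative BRST cohomology vanishes at every ghost number other than one: H^g(R(p,q)) = 0 for all integers g ≠ 1. In other words, for non-vanishing momentum the relative cohomology in the (−1,0) picture resides at ghost number one only. -/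
/-!
Choose `r` with `r·q = 1` (possible since `q ≠ 0`) and let `K` lower the degree by one via
`K A_{N+1}^μ = r_μ B_N`, `K C_N = -r₁ A_N^0 + r₀ A_N^1`, and `K = 0` on `A_0^μ` and `B_N`.
Checking on basis vectors, `QK + KQ = 1` in every degree `≥ 2`, so a cocycle `x` of such a
degree equals `Q (K x)`. In degrees `≤ 0` the complex is zero.
-/

open Finsupp

lemma RB.one_le_deg (b : RB) : 1 ≤ b.deg := by
  cases b <;> simp only [RB.deg] <;> omega

lemma Rdeg_eq_bot_of_nonpos {g : ℤ} (hg : g ≤ 0) : Rdeg g = ⊥ := by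
  have hempty : {b : RB | b.deg = g} = ∅ :=
    Set.eq_empty_of_forall_notMem fun b (hb : b.deg = g) => by
      have := b.one_le_deg
      omega
  rw [Rdeg, hempty, supported_empty]

lemma exists_dotProduct_eq_one {K ι : Type*} [Field K] [Fintype ι] [DecidableEq ι]
    {q : ι → K} (hq : q ≠ 0) : ∃ r : ι → K, r ⬝ᵥ q = 1 := by
  obtain ⟨i, hi⟩ := Function.ne_iff.mp hq
  exact ⟨Pi.single i (q i)⁻¹, by simpa using inv_mul_cancel₀ hi⟩

section Qmap

variable (p q : Fin 2 → ℂ) (N : ℕ)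

@[simp]
lemma Qmap_single_A_zero :
    Qmap p q (single (.A N 0) 1) = (2 * p 0) • single (.B N) 1 + -q 1 • single (.C N) 1 := by
  simp [Qmap, lift_apply, sum_single_index]

@[simp]
lemma Qmap_single_A_one :
    Qmap p q (single (.A N 1) 1) = (2 * p 1) • single (.B N) 1 + q 0 • single (.C N) 1 := by
  simp [Qmap, lift_apply, sum_single_index]

@[simp]
lemma Qmap_single_B :
    Qmap p q (single (.B N) 1) =
      q 0 • single (.A (N + 1) 0) 1 + q 1 • single (.A (N + 1) 1) 1 := by
  simp [Qmap, lift_apply, sum_single_index]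

@[simp]
lemma Qmap_single_C :
    Qmap p q (single (.C N) 1) =
      (2 * p 0) • single (.A (N + 1) 1) 1 - (2 * p 1) • single (.A (N + 1) 0) 1 := by
  simp [Qmap, lift_apply, sum_single_index]

end Qmap

noncomputable def contractingHomotopy (r : Fin 2 → ℂ) : RSpace →ₗ[ℂ] RSpace :=
  Finsupp.lift RSpace ℂ RB fun b => match b with
    | .A 0 _ => 0
    | .A (N + 1) μ => r μ • single (.B N) 1
    | .B _ => 0
    | .C N => -r 1 • single (.A N 0) 1 + r 0 • single (.A N 1) 1

section contractingHomotopy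

variable (r : Fin 2 → ℂ) (N : ℕ)

@[simp]
lemma contractingHomotopy_single_A_zero (μ : Fin 2) :
    contractingHomotopy r (single (.A 0 μ) 1) = 0 := by
  simp [contractingHomotopy, lift_apply, sum_single_index]

@[simp]
lemma contractingHomotopy_single_A_succ (μ : Fin 2) :
    contractingHomotopy r (single (.A (N + 1) μ) 1) = r μ • single (.B N) 1 := by
  simp [contractingHomotopy, lift_apply, sum_single_index]

@[simp]
lemma contractingHomotopy_single_B : contractingHomotopy r (single (.B N) 1) = 0 := by
  simp [contractingHomotopy, lift_apply, sum_single_index]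

@[simp]
lemma contractingHomotopy_single_C :
    contractingHomotopy r (single (.C N) 1) =
      -r 1 • single (.A N 0) 1 + r 0 • single (.A N 1) 1 := by
  simp [contractingHomotopy, lift_apply, sum_single_index]

end contractingHomotopy

lemma Rdeg_le_comap_contractingHomotopy (r : Fin 2 → ℂ) (g : ℤ) :
    Rdeg g ≤ (Rdeg (g - 1)).comap (contractingHomotopy r) := by
  rw [Rdeg, supported_eq_span_single, Submodule.span_le]
  rintro _ ⟨b, rfl : b.deg = g, rfl⟩
  rcases b with ⟨_ | N, μ⟩ | N | N <;>
    simp only [SetLike.mem_coe, Submodule.mem_comap, contractingHomotopy_single_A_zero,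
      contractingHomotopy_single_A_succ, contractingHomotopy_single_B,
      contractingHomotopy_single_C] <;>
    apply_rules [Submodule.add_mem, Submodule.smul_mem, Submodule.zero_mem,
      single_mem_supported] <;>
    (show RB.deg _ = RB.deg _ - 1; simp only [RB.deg]; push_cast; ring)

lemma Qmap_contractingHomotopy_add_single {p q r : Fin 2 → ℂ} (hr : r ⬝ᵥ q = 1)
    {b : RB} (hb : 2 ≤ b.deg) :
    Qmap p q (contractingHomotopy r (single b 1))
      + contractingHomotopy r (Qmap p q (single b 1)) = single b 1 := by
  simp only [dotProduct, Fin.sum_univ_two] at hr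
  cases b with
  | A N μ =>
    obtain _ | N := N
    · simp [RB.deg] at hb
    fin_cases μ <;>
      simp only [Fin.zero_eta, Fin.mk_one, Qmap_single_A_zero, Qmap_single_A_one, Qmap_single_B,
        contractingHomotopy_single_A_succ, contractingHomotopy_single_B,
        contractingHomotopy_single_C, map_add, map_smul, smul_zero, zero_add] <;>
      [linear_combination (norm := module) hr • single (RB.A (N + 1) 0) (1 : ℂ);
       linear_combination (norm := module) hr • single (RB.A (N + 1) 1) (1 : ℂ)]
  | B N =>
    simp only [Qmap_single_B, contractingHomotopy_single_B, contractingHomotopy_single_A_succ,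
      map_add, map_smul, map_zero, zero_add]
    linear_combination (norm := module) hr • single (RB.B N) (1 : ℂ)
  | C N =>
    simp only [Qmap_single_A_zero, Qmap_single_A_one, Qmap_single_C,
      contractingHomotopy_single_A_succ, contractingHomotopy_single_C, map_add, map_sub, map_smul]
    linear_combination (norm := module) hr • single (RB.C N) (1 : ℂ)

lemma Qmap_contractingHomotopy_add_of_mem_Rdeg {p q r : Fin 2 → ℂ} (hr : r ⬝ᵥ q = 1) {g : ℤ}
    (hg : 2 ≤ g) {x : RSpace} (hx : x ∈ Rdeg g) :
    Qmap p q (contractingHomotopy r x) + contractingHomotopy r (Qmap p q x) = x := by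
  rw [Rdeg, supported_eq_span_single] at hx
  refine LinearMap.eqOn_span (f := Qmap p q ∘ₗ contractingHomotopy r
    + contractingHomotopy r ∘ₗ Qmap p q) (g := LinearMap.id) ?_ hx
  rintro _ ⟨b, hb : b.deg = g, rfl⟩
  exact Qmap_contractingHomotopy_add_single hr (hb ▸ hg)

lemma Zg_le_Bg {p q : Fin 2 → ℂ} (hq : q ≠ 0) {g : ℤ} (hg : g ≠ 1) : Zg p q g ≤ Bg p q g := by
  rintro x ⟨hxg : x ∈ Rdeg g, hxQ : Qmap p q x = 0⟩
  rcases le_or_gt g 0 with hg0 | hg1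
  · rw [Rdeg_eq_bot_of_nonpos hg0, Submodule.mem_bot] at hxg
    exact hxg ▸ zero_mem _
  · obtain ⟨r, hr⟩ := exists_dotProduct_eq_one hq
    refine ⟨contractingHomotopy r x, Rdeg_le_comap_contractingHomotopy r g hxg, ?_⟩
    simpa [hxQ] using Qmap_contractingHomotopy_add_of_mem_Rdeg (p := p) hr (by omega) hxg

theorem relative_cohomology_vanishes_general (p q : Fin 2 → ℂ)
    (hq : q ≠ 0) :
    ∀ g : ℤ, g ≠ 1 → Hco p q g = ⊥ := fun _ hg =>
  eq_bot_iff.2 <| (Submodule.map_mono (Zg_le_Bg hq hg)).trans (Submodule.mkQ_map_self _).le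

/-- Assume `p·q = 0` and `q ≠ 0`.  Then the relative BRST
cohomology vanishes at every ghost number other than one: `H^g(R(p,q)) = 0`
for all integers `g ≠ 1`.  In other words, for non-vanishing momentum the
relative cohomology in the (−1,0) picture resides at ghost number one only. -/
theorem relative_cohomology_vanishes (p q : Fin 2 → ℂ)
    (h : p 0 * q 0 + p 1 * q 1 = 0) (hq : q ≠ 0) :
    ∀ g : ℤ, g ≠ 1 → Hco p q g = ⊥ :=
  relative_cohomology_vanishes_general p q hq
end

section
/- Assume p·q = 0 and q ≠ 0. Then the absolute BRST cohomology of Ab(p,q) vanishes at every ghost number other than one and two: H^g(Ab(p,q)) = 0 for all integers g ∉ {1,2}. -/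
/-!
The absolute complex `Ab(p,q) := R ⊕ c₀R`.  An element is a pair `(x, y)`
representing `x + c₀ y` with `x, y ∈ R`.  The degree-`g` part is
`R^g ⊕ c₀ R^{g-1}`.  The shift operator `S` has degree `+2` and sends each
basis vector at level `N` to the corresponding one at level `N+1`, and the
differential is extended by `Q(c₀ y) = −4 S y − c₀ (Q y)`.
-/

/-- The level shift `N ↦ N + 1` on basis vectors. -/
def RB.shift : RB → RB
  | .A N μ => .A (N + 1) μ
  | .B N => .B (N + 1)
  | .C N => .C (N + 1)

/-- The degree `+2` map `S` with `S A_N^μ = A_{N+1}^μ`, `S B_N = B_{N+1}`,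
`S C_N = C_{N+1}`. -/
noncomputable def Smap : RSpace →ₗ[ℂ] RSpace :=
  Finsupp.lmapDomain ℂ ℂ RB.shift

/-- The underlying space of the absolute complex `Ab(p,q) = R ⊕ c₀R`:
the pair `(x, y)` represents `x + c₀ y`. -/
abbrev AbSpace : Type := RSpace × RSpace

/-- The degree-`g` graded piece `Ab^g = R^g ⊕ c₀ R^{g-1}`. -/
noncomputable def AbDeg (g : ℤ) : Submodule ℂ AbSpace :=
  (Rdeg g).prod (Rdeg (g - 1))

/-- The BRST differential on the absolute complex:
`Q (x + c₀ y) = (Q x − 4 S y) − c₀ (Q y)`. -/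
noncomputable def QAb (p q : Fin 2 → ℂ) : AbSpace →ₗ[ℂ] AbSpace :=
  LinearMap.prod
    ((Qmap p q) ∘ₗ (LinearMap.fst ℂ RSpace RSpace)
      - (4 : ℂ) • (Smap ∘ₗ (LinearMap.snd ℂ RSpace RSpace)))
    (- ((Qmap p q) ∘ₗ (LinearMap.snd ℂ RSpace RSpace)))

/-- Degree-`g` cocycles of the absolute complex. -/
noncomputable def AbZ (p q : Fin 2 → ℂ) (g : ℤ) : Submodule ℂ AbSpace :=
  AbDeg g ⊓ LinearMap.ker (QAb p q)

/-- Degree-`g` coboundaries of the absolute complex: `Q(Ab^{g-1})`. -/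
noncomputable def AbB (p q : Fin 2 → ℂ) (g : ℤ) : Submodule ℂ AbSpace :=
  (AbDeg (g - 1)).map (QAb p q)

/-- The absolute BRST cohomology
`H^g(Ab(p,q)) = (ker Q ∩ Ab^g)/Q(Ab^{g-1})`, realised as the image of the
cocycles in the quotient by the coboundaries. -/
noncomputable def HAb (p q : Fin 2 → ℂ) (g : ℤ) :
    Submodule ℂ (AbSpace ⧸ AbB p q g) :=
  (AbZ p q g).map (AbB p q g).mkQ


lemma fin2_cases (i : Fin 2) : i = 0 ∨ i = 1 := by revert i; decide

open Finsupp in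
/-- The contracting homotopy on the relative complex (parametrised by a
choice `j` with `q j ≠ 0` and `c = (q j)⁻¹`). -/
noncomputable def Tmap (c : ℂ) (j : Fin 2) : RSpace →ₗ[ℂ] RSpace :=
  Finsupp.lift RSpace ℂ RB fun b => match b with
    | .A 0 _ => 0
    | .A (N + 1) μ => if μ = j then c • single (RB.B N) (1 : ℂ) else 0
    | .B _ => 0
    | .C N =>
        if j = 0 then c • single (RB.A N 1) (1 : ℂ)
        else (-c) • single (RB.A N 0) (1 : ℂ)

lemma lift_single_one (f : RB → RSpace) (b : RB) :
    Finsupp.lift RSpace ℂ RB f (Finsupp.single b 1) = f b := by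
  rw [Finsupp.lift_apply, Finsupp.sum_single_index (by simp), one_smul]

lemma Qmap_single (p q : Fin 2 → ℂ) (b : RB) :
    Qmap p q (Finsupp.single b 1) =
      (match b with
        | .A N μ =>
            (2 * p μ) • Finsupp.single (RB.B N) (1 : ℂ)
              + (if μ = 0 then -(q 1) else q 0) • Finsupp.single (RB.C N) (1 : ℂ)
        | .B N =>
            q 0 • Finsupp.single (RB.A (N + 1) 0) (1 : ℂ)
              + q 1 • Finsupp.single (RB.A (N + 1) 1) (1 : ℂ)
        | .C N =>
            (2 * p 0) • Finsupp.single (RB.A (N + 1) 1) (1 : ℂ)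
              - (2 * p 1) • Finsupp.single (RB.A (N + 1) 0) (1 : ℂ)) := by
  unfold Qmap; exact lift_single_one _ _

lemma Tmap_single (c : ℂ) (j : Fin 2) (b : RB) :
    Tmap c j (Finsupp.single b 1) =
      (match b with
        | .A 0 _ => 0
        | .A (N + 1) μ => if μ = j then c • Finsupp.single (RB.B N) (1 : ℂ) else 0
        | .B _ => 0
        | .C N =>
            if j = 0 then c • Finsupp.single (RB.A N 1) (1 : ℂ)
            else (-c) • Finsupp.single (RB.A N 0) (1 : ℂ)) := by
  unfold Tmap; exact lift_single_one _ _

lemma Smap_single (b : RB) (a : ℂ) :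
    Smap (Finsupp.single b a) = Finsupp.single b.shift a := by
  unfold Smap
  rw [Finsupp.lmapDomain_apply, Finsupp.mapDomain_single]

lemma single_mem_Rdeg {b : RB} {d : ℤ} (h : RB.deg b = d) :
    Finsupp.single b (1 : ℂ) ∈ Rdeg d :=
  Finsupp.single_mem_supported ℂ 1 h

/-- `T` lowers the degree by one. -/
lemma Tmap_mem (c : ℂ) (j : Fin 2) {d : ℤ} {x : RSpace} (hx : x ∈ Rdeg d) :
    Tmap c j x ∈ Rdeg (d - 1) := by
  rw [Rdeg, Finsupp.supported_eq_span_single] at hx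
  induction hx using Submodule.span_induction with
  | mem y hy =>
      obtain ⟨b, hb, rfl⟩ := hy
      have hb' : RB.deg b = d := hb
      cases b with
      | A N μ =>
          cases N with
          | zero => rw [Tmap_single]; exact Submodule.zero_mem _
          | succ M =>
              rw [Tmap_single]
              by_cases hμ : μ = j
              · simp only [hμ, if_true]
                refine Submodule.smul_mem _ _ (single_mem_Rdeg ?_)
                simp only [RB.deg] at hb' ⊢
                push_cast at hb' ⊢
                omega
              · simp only [hμ, if_false]; exact Submodule.zero_mem _
      | B N => rw [Tmap_single]; exact Submodule.zero_mem _
      | C N =>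
          rw [Tmap_single]
          by_cases hj : j = 0
          · simp only [hj, if_true]
            refine Submodule.smul_mem _ _ (single_mem_Rdeg ?_)
            simp only [RB.deg] at hb' ⊢; omega
          · simp only [hj, if_false]
            refine Submodule.smul_mem _ _ (single_mem_Rdeg ?_)
            simp only [RB.deg] at hb' ⊢; omega
  | zero => exact Submodule.zero_mem _
  | add x y _ _ ihx ihy => rw [map_add]; exact Submodule.add_mem _ ihx ihy
  | smul a x _ ih => rw [map_smul]; exact Submodule.smul_mem _ a ih

/-- `T` commutes with the shift `S` in degrees at least two. -/
lemma Tmap_Smap (c : ℂ) (j : Fin 2) {d : ℤ} (hd : 2 ≤ d) {x : RSpace}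
    (hx : x ∈ Rdeg d) : Tmap c j (Smap x) = Smap (Tmap c j x) := by
  rw [Rdeg, Finsupp.supported_eq_span_single] at hx
  induction hx using Submodule.span_induction with
  | mem y hy =>
      obtain ⟨b, hb, rfl⟩ := hy
      have hb' : RB.deg b = d := hb
      cases b with
      | A N μ =>
          cases N with
          | zero => simp only [RB.deg] at hb'; omega
          | succ M =>
              rw [Smap_single]
              show Tmap c j (Finsupp.single (RB.A (M + 2) μ) 1) = _
              rw [Tmap_single, Tmap_single]
              by_cases hμ : μ = j
              · simp only [hμ, if_true, map_smul, Smap_single, RB.shift]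
              · simp only [hμ, if_false, map_zero]
      | B N =>
          rw [Smap_single]
          show Tmap c j (Finsupp.single (RB.B (N + 1)) 1) = _
          rw [Tmap_single, Tmap_single]; simp
      | C N =>
          rw [Smap_single]
          show Tmap c j (Finsupp.single (RB.C (N + 1)) 1) = _
          rw [Tmap_single, Tmap_single]
          by_cases hj : j = 0
          · simp only [hj, if_true, map_smul, Smap_single, RB.shift]
          · simp only [hj, if_false, map_smul, map_neg, Smap_single, RB.shift,
              neg_smul]
  | zero => simp
  | add x y _ _ ihx ihy => simp only [map_add, ihx, ihy]
  | smul a x _ ih => simp only [map_smul, ih]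

/-- The homotopy identity `Q T + T Q = id` in degrees at least two. -/
lemma homotopy_id (p q : Fin 2 → ℂ) (c : ℂ) (j : Fin 2) (hc : c * q j = 1)
    {d : ℤ} (hd : 2 ≤ d) {x : RSpace} (hx : x ∈ Rdeg d) :
    Qmap p q (Tmap c j x) + Tmap c j (Qmap p q x) = x := by
  rw [Rdeg, Finsupp.supported_eq_span_single] at hx
  induction hx using Submodule.span_induction with
  | mem y hy =>
      obtain ⟨b, hb, rfl⟩ := hy
      have hb' : RB.deg b = d := hb
      cases b with
      | A N μ =>
          cases N with
          | zero => simp only [RB.deg] at hb'; omega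
          | succ M =>
              clear hb hb' hd
              rcases fin2_cases j with rfl | rfl <;>
                rcases fin2_cases μ with rfl | rfl <;>

                · rw [Qmap_single, Tmap_single]
                  simp only [show ((1:Fin 2) = 0) ↔ False by decide,
                    show ((0:Fin 2) = 0) ↔ True by decide,
                    show ((0:Fin 2) = 1) ↔ False by decide,
                    show ((1:Fin 2) = 1) ↔ True by decide, if_true, if_false,
                    map_add, map_smul, map_sub, map_zero, Qmap_single,
                    Tmap_single, smul_zero, smul_add,
                    smul_sub, smul_smul, add_zero, zero_add, sub_zero]
                  match_scalars <;> first | ring1 | linear_combination hc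
      | B N =>
          clear hb hb' hd
          rcases fin2_cases j with rfl | rfl <;>
            · rw [Qmap_single, Tmap_single]
              simp only [show ((1:Fin 2) = 0) ↔ False by decide,
                    show ((0:Fin 2) = 0) ↔ True by decide,
                    show ((0:Fin 2) = 1) ↔ False by decide,
                    show ((1:Fin 2) = 1) ↔ True by decide, if_true, if_false,
                    map_add, map_smul, map_sub, map_zero, Qmap_single,
                Tmap_single, smul_zero, smul_add,
                smul_sub, smul_smul, add_zero, zero_add, sub_zero]
              match_scalars <;> first | ring1 | linear_combination hc
      | C N =>
          clear hb hb' hd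
          rcases fin2_cases j with rfl | rfl <;>
            · rw [Qmap_single, Tmap_single]
              simp only [show ((1:Fin 2) = 0) ↔ False by decide,
                    show ((0:Fin 2) = 0) ↔ True by decide,
                    show ((0:Fin 2) = 1) ↔ False by decide,
                    show ((1:Fin 2) = 1) ↔ True by decide, if_true, if_false,
                    map_add, map_smul, map_sub, map_zero, map_neg,
                Qmap_single, Tmap_single, smul_zero,
                smul_add, smul_sub, smul_smul, smul_neg, neg_smul, add_zero,
                zero_add, sub_zero, neg_zero]
              match_scalars <;> first | ring1 | linear_combination hc
  | zero => simp
  | add x y _ _ ihx ihy =>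
      simp only [map_add]
      calc Qmap p q (Tmap c j x) + Qmap p q (Tmap c j y)
            + (Tmap c j (Qmap p q x) + Tmap c j (Qmap p q y))
          = (Qmap p q (Tmap c j x) + Tmap c j (Qmap p q x))
            + (Qmap p q (Tmap c j y) + Tmap c j (Qmap p q y)) := by abel
        _ = x + y := by rw [ihx, ihy]
  | smul a x _ ih =>
      simp only [map_smul, ← smul_add, ih]

lemma QAb_apply (p q : Fin 2 → ℂ) (z : AbSpace) :
    QAb p q z = (Qmap p q z.1 - (4 : ℂ) • Smap z.2, - Qmap p q z.2) := rfl

lemma Rdeg_eq_bot {d : ℤ} (hd : d ≤ 0) : Rdeg d = ⊥ := by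
  have hset : {b : RB | RB.deg b = d} = ∅ := by
    ext b
    simp only [Set.mem_setOf_eq, Set.mem_empty_iff_false, iff_false]
    cases b <;> simp only [RB.deg] <;> omega
  rw [Rdeg, hset, Finsupp.supported_empty]

/-- Assume `p·q = 0` and `q ≠ 0`.  Then the absolute BRST
cohomology of `Ab(p,q)` vanishes at every ghost number other than one and two:
`H^g(Ab(p,q)) = 0` for all integers `g ∉ {1, 2}`. -/
theorem absolute_cohomology_vanishes (p q : Fin 2 → ℂ)
    (h : p 0 * q 0 + p 1 * q 1 = 0) (hq : q ≠ 0) :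
    ∀ g : ℤ, g ∉ ({1, 2} : Set ℤ) → HAb p q g = ⊥ := by
  intro g hg
  simp only [Set.mem_insert_iff, Set.mem_singleton_iff, not_or] at hg
  obtain ⟨hg1, hg2⟩ := hg
  rcases le_or_gt g 0 with hle | hpos
  · -- trivial vanishing: `Ab^g = 0`
    have hZ : AbZ p q g = ⊥ := by
      rw [AbZ, AbDeg, Rdeg_eq_bot hle, Rdeg_eq_bot (by omega : g - 1 ≤ 0),
        Submodule.prod_bot, bot_inf_eq]
    rw [HAb, hZ, Submodule.map_bot]
  · obtain ⟨j, hj⟩ : ∃ j, q j ≠ 0 := Function.ne_iff.mp hq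
    have hc : (q j)⁻¹ * q j = 1 := inv_mul_cancel₀ hj
    set c : ℂ := (q j)⁻¹
    have key : AbZ p q g ≤ AbB p q g := by
      intro z hz
      rw [AbZ, Submodule.mem_inf] at hz
      obtain ⟨hzd, hzk⟩ := hz
      rw [AbDeg, Submodule.mem_prod] at hzd
      obtain ⟨hz1, hz2⟩ := hzd
      rw [LinearMap.mem_ker, QAb_apply, Prod.mk_eq_zero] at hzk
      obtain ⟨hk1, hk2⟩ := hzk
      have hQz2 : Qmap p q z.2 = 0 := by rwa [neg_eq_zero] at hk2
      have hQz1 : Qmap p q z.1 = (4 : ℂ) • Smap z.2 := by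
        rwa [sub_eq_zero] at hk1
      have e1 := homotopy_id p q c j hc (by omega : (2:ℤ) ≤ g) hz1
      have e2 := homotopy_id p q c j hc (by omega : (2:ℤ) ≤ g - 1) hz2
      have e3 := Tmap_Smap c j (by omega : (2:ℤ) ≤ g - 1) hz2
      rw [AbB]
      refine Submodule.mem_map.mpr ⟨(Tmap c j z.1, - Tmap c j z.2), ?_, ?_⟩
      · rw [AbDeg, Submodule.mem_prod]
        exact ⟨Tmap_mem c j hz1, Submodule.neg_mem _ (Tmap_mem c j hz2)⟩
      · rw [QAb_apply]
        have comp1 : Qmap p q (Tmap c j z.1) - (4 : ℂ) • Smap (- Tmap c j z.2)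
            = z.1 := by
          rw [map_neg, smul_neg, sub_neg_eq_add, ← e3, ← map_smul, ← hQz1]
          exact e1
        have comp2 : - Qmap p q (- Tmap c j z.2) = z.2 := by
          rw [map_neg, neg_neg]
          rw [hQz2, map_zero, add_zero] at e2
          exact e2
        exact Prod.ext comp1 comp2
    rw [HAb, eq_bot_iff]
    rintro u hu
    obtain ⟨z, hzZ, rfl⟩ := Submodule.mem_map.mp hu
    have hzB : z ∈ AbB p q g := key hzZ
    simpa only [Submodule.mem_bot, Submodule.mkQ_apply,
      Submodule.Quotient.mk_eq_zero] using hzB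
end

section
/- Let V = ⊕_{g∈ℤ} V^g be a graded ℂ-vector space with linear maps Q (degree +1), b (degree −1), c (degree +1) satisfying Q² = 0, b² = 0, c² = 0, bc + cb = id, and Qb + bQ = 0, and set W := ker b (a Q-subcomplex). Let ι: H^g(W) → H^g(V) be induced by inclusion, β: H^g(V) → H^{g−1}(W) be induced by [v] ↦ [bv], and δ: H^g(W) → H^{g+2}(W) be induced by [w] ↦ [Qcw]. Then for every g the sequence H^{g+1}(V) →^β H^g(W) →^δ H^{g+2}(W) →^ι H^{g+2}(V) →^β H^{g+1}(W) is exact at each of the three interior positions; i.e. the long exact sequence ⋯ → H^{g+1}(V) → H^g(W) → H^{g+2}(W) → H^{g+2}(V) → H^{g+1}(W) → ⋯ relating the absolute cohomology H(V) and the relative cohomology H(W) holds, with connecting homomorphism induced by {Q,c}. -/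
/-- Let `V = ⊕_{g ∈ ℤ} V^g` be a graded ℂ-vector space with
linear maps `Q` (degree `+1`), `b` (degree `−1`), `c` (degree `+1`) satisfying
`Q² = 0`, `b² = 0`, `c² = 0`, `bc + cb = id`, and `Qb + bQ = 0`, and set
`W := ker b` (a `Q`-subcomplex, with `W^g := {v ∈ V^g | b v = 0}`).  Let
`ι : H^g(W) → H^g(V)` be induced by inclusion, `β : H^g(V) → H^{g−1}(W)` be
induced by `[v] ↦ [b v]`, and `δ : H^g(W) → H^{g+2}(W)` be induced by
`[w] ↦ [Q c w]`.  Then for every `g` the sequence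
`H^{g+1}(V) →^β H^g(W) →^δ H^{g+2}(W) →^ι H^{g+2}(V) →^β H^{g+1}(W)`
is exact at each of the three interior positions.  Below the exactness
conditions are stated elementwise on (graded) cocycle representatives, where
a cohomology class of `H^n(V)` vanishes iff its representative lies in
`Q(V^{n−1})`, and a class of `H^n(W)` vanishes iff its representative lies in
`Q(W^{n−1})`. -/
theorem long_exact_sequence_relative_absolute {V : Type*} [AddCommGroup V]
    [Module ℂ V] (𝒱 : ℤ → Submodule ℂ V) (hgrading : DirectSum.IsInternal 𝒱)
    (Q b c : V →ₗ[ℂ] V)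
    (hQdeg : ∀ g : ℤ, ∀ v ∈ 𝒱 g, Q v ∈ 𝒱 (g + 1))
    (hbdeg : ∀ g : ℤ, ∀ v ∈ 𝒱 g, b v ∈ 𝒱 (g - 1))
    (hcdeg : ∀ g : ℤ, ∀ v ∈ 𝒱 g, c v ∈ 𝒱 (g + 1))
    (hQ2 : Q ∘ₗ Q = 0) (hb2 : b ∘ₗ b = 0) (hc2 : c ∘ₗ c = 0)
    (hbc : b ∘ₗ c + c ∘ₗ b = LinearMap.id)
    (hQb : Q ∘ₗ b + b ∘ₗ Q = 0) (g : ℤ) :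
    -- exactness at `H^g(W)`: `ker δ = im β`
    (∀ w ∈ 𝒱 g, b w = 0 → Q w = 0 →
      ((∃ u ∈ 𝒱 (g + 1), b u = 0 ∧ Q (c w) = Q u) ↔
        (∃ v ∈ 𝒱 (g + 1), Q v = 0 ∧
          ∃ u ∈ 𝒱 (g - 1), b u = 0 ∧ w = b v + Q u)))
    -- exactness at `H^{g+2}(W)`: `ker ι = im δ`
    ∧ (∀ w' ∈ 𝒱 (g + 2), b w' = 0 → Q w' = 0 →
      ((∃ u ∈ 𝒱 (g + 1), w' = Q u) ↔
        (∃ w ∈ 𝒱 g, b w = 0 ∧ Q w = 0 ∧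
          ∃ u ∈ 𝒱 (g + 1), b u = 0 ∧ w' = Q (c w) + Q u)))
    -- exactness at `H^{g+2}(V)`: `ker β = im ι`
    ∧ (∀ v ∈ 𝒱 (g + 2), Q v = 0 →
      ((∃ u ∈ 𝒱 g, b u = 0 ∧ b v = Q u) ↔
        (∃ w ∈ 𝒱 (g + 2), b w = 0 ∧ Q w = 0 ∧
          ∃ u ∈ 𝒱 (g + 1), v = w + Q u))) := by
  have hQ2' : ∀ x, Q (Q x) = 0 := fun x => by simpa using LinearMap.congr_fun hQ2 x
  have hb2' : ∀ x, b (b x) = 0 := fun x => by simpa using LinearMap.congr_fun hb2 x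
  have hbc' : ∀ x, b (c x) + c (b x) = x := fun x => by simpa using LinearMap.congr_fun hbc x
  have hQb' : ∀ x, Q (b x) + b (Q x) = 0 := fun x => by simpa using LinearMap.congr_fun hQb x
  have hmem : ∀ {a a' : ℤ}, a = a' → ∀ {v : V}, v ∈ 𝒱 a → v ∈ 𝒱 a' := by
    rintro a a' rfl v hv; exact hv
  refine ⟨?_, ?_, ?_⟩
  · -- exactness at H^g(W)
    intro w hw hbw hQw
    constructor
    · rintro ⟨u, hu, hbu, hQcw⟩
      refine ⟨c w - u, sub_mem (hcdeg g w hw) hu, by rw [map_sub, hQcw, sub_self], 0,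
        zero_mem _, map_zero b, ?_⟩
      have h1 := hbc' w
      rw [hbw, map_zero, add_zero] at h1
      rw [map_sub, h1, hbu, sub_zero, map_zero, add_zero]
    · rintro ⟨v, hv, hQv, u', hu', hbu', hw'⟩
      refine ⟨c w - v + Q (c u'), ?_, ?_, ?_⟩
      · exact add_mem (sub_mem (hcdeg g w hw) hv)
          (hmem (by ring) (hQdeg _ _ (hcdeg _ _ hu')))
      · -- b u = 0
        have h1 := hbc' w
        rw [hbw, map_zero, add_zero] at h1
        have h2 := hbc' u'
        rw [hbu', map_zero, add_zero] at h2
        have h3 := hQb' (c u')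
        rw [h2] at h3
        -- h3 : Q u' + b (Q (c u')) = 0
        rw [map_add, map_sub, h1]
        rw [eq_neg_of_add_eq_zero_right h3, hw']
        abel
      · rw [map_add, map_sub, hQv, sub_zero, hQ2' (c u'), add_zero]
  · -- exactness at H^{g+2}(W)
    intro w' hw' hbw' hQw'
    constructor
    · rintro ⟨u, hu, hw⟩
      refine ⟨b u, hmem (by ring) (hbdeg _ _ hu), hb2' u, ?_, b (c u),
        hmem (by ring) (hbdeg _ _ (hcdeg _ _ hu)), hb2' (c u), ?_⟩
      · have h := hQb' u
        rw [← hw, hbw', add_zero] at h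
        exact h
      · rw [← map_add, add_comm (c (b u)), hbc' u, hw]
    · rintro ⟨w, hw, hbw, hQw, u, hu, hbu, hw''⟩
      exact ⟨c w + u, add_mem (hcdeg _ _ hw) hu, by rw [map_add, hw'']⟩
  · -- exactness at H^{g+2}(V)
    intro v hv hQv
    constructor
    · rintro ⟨u, hu, hbu, hbv⟩
      refine ⟨v + Q (c u), add_mem hv (hmem (by ring) (hQdeg _ _ (hcdeg _ _ hu))),
        ?_, by rw [map_add, hQv, hQ2' (c u), add_zero], -(c u), neg_mem (hcdeg _ _ hu), ?_⟩
      · have h1 := hbc' u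
        rw [hbu, map_zero, add_zero] at h1
        have h2 := hQb' (c u)
        rw [h1] at h2
        -- h2 : Q u + b (Q (c u)) = 0
        rw [map_add, hbv, eq_neg_of_add_eq_zero_right h2]
        abel
      · rw [map_neg]; abel
    · rintro ⟨w, hw, hbw, hQw, u, hu, hv'⟩
      refine ⟨-(b u), neg_mem (hmem (by ring) (hbdeg _ _ hu)), by rw [map_neg, hb2' u, neg_zero], ?_⟩
      have h := hQb' u
      rw [hv', map_add, hbw, zero_add, map_neg, eq_neg_of_add_eq_zero_right h]
end
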